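/- Let E be a real inner product space, f : E → ℝ convex and differentiable, x* with f(x*) ≤ f(x) for all x, and let p > 0 and C > 0 be real numbers, t₀ > 0. Suppose X, V, A : ℝ → E satisfy, for every t ≥ t₀: X has derivative V t at t, V has derivative A t at t, and A t + ((p+1)/t) • V t + (C p² t^{p−2}) • ∇f(X t) = 0. Then for every t ≥ t₀: f(X t) − f(x*) ≤ E₀ / (C t^p), where E₀ = (1/2)‖X t₀ + (t₀/p) • V t₀ − x*‖² + C t₀^p (f(X t₀) − f(x*)). -/

import Mathlib

open Real
open scoped RealInnerProductSpace

/-!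
The energy `E_t = ½‖X_t + (t/p)Ẋ_t − x*‖² + C t^p (f(X_t) − f(x*))` is a Lyapunov function.
Along the flow the curve `X_t + (t/p)Ẋ_t` moves with velocity `−C p t^{p−1} ∇f(X_t)`, so
`Ė_t = C p t^{p−1} (f(X_t) − f(x*) − ⟪∇f(X_t), X_t − x*⟫)`, which is `≤ 0` by convexity.
Hence `C t^p (f(X_t) − f(x*)) ≤ E_t ≤ E_{t₀}`.
-/

theorem HasGradientAt.comp_hasDerivAt {E : Type*} [NormedAddCommGroup E]
    [InnerProductSpace ℝ E] [CompleteSpace E] {f : E → ℝ} {g : ℝ → E} {f' g' : E} {t : ℝ}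
    (hf : HasGradientAt f f' (g t)) (hg : HasDerivAt g g' t) :
    HasDerivAt (f ∘ g) ⟪f', g'⟫ t := by
  simpa [InnerProductSpace.toDual_apply_apply] using hf.hasFDerivAt.comp_hasDerivAt t hg

namespace PolynomialEulerLagrange

theorem hasDerivAt_add_div_smul_sub {F : Type*} [NormedAddCommGroup F] [NormedSpace ℝ F]
    {xstar w : F} {p C t : ℝ} {X V A : ℝ → F} (hp : p ≠ 0) (ht : t ≠ 0)
    (hX : HasDerivAt X (V t) t) (hV : HasDerivAt V (A t) t)
    (hODE : A t + ((p + 1) / t) • V t + (C * p ^ 2 * t ^ (p - 2)) • w = 0) :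
    HasDerivAt (fun s => X s + (s / p) • V s - xstar) (-(C * p * t ^ (p - 1)) • w) t := by
  have hA : A t = -(((p + 1) / t) • V t + (C * p ^ 2 * t ^ (p - 2)) • w) := by
    rw [add_assoc] at hODE
    exact eq_neg_of_add_eq_zero_left hODE
  have hpow : t ^ (p - 1) = t ^ (p - 2) * t := by
    rw [← rpow_add_one ht]
    ring_nf
  have hdiv : HasDerivAt (fun s : ℝ => s / p) (1 / p) t := by
    simpa using (hasDerivAt_id t).div_const p
  refine ((hX.add (hdiv.smul hV)).sub_const xstar).congr_deriv ?_
  rw [hA]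
  match_scalars
  · field_simp
    ring
  · rw [hpow]
    field_simp

variable {E : Type*} [NormedAddCommGroup E] [InnerProductSpace ℝ E]

noncomputable def energy (f : E → ℝ) (xstar : E) (p C : ℝ) (X V : ℝ → E) (t : ℝ) : ℝ :=
  (1 / 2) * ‖X t + (t / p) • V t - xstar‖ ^ 2 + C * t ^ p * (f (X t) - f xstar)

variable {f : E → ℝ} {xstar : E} {p C t : ℝ} {X V A : ℝ → E}

theorem sub_le_energy_div (hCt : 0 < C * t ^ p) :
    f (X t) - f xstar ≤ energy f xstar p C X V t / (C * t ^ p) := by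
  rw [le_div_iff₀ hCt, energy]
  nlinarith [sq_nonneg ‖X t + (t / p) • V t - xstar‖]

variable [CompleteSpace E]

theorem hasDerivAt_energy (hf : DifferentiableAt ℝ f (X t)) (hp : p ≠ 0) (ht : t ≠ 0)
    (hX : HasDerivAt X (V t) t) (hV : HasDerivAt V (A t) t)
    (hODE : A t + ((p + 1) / t) • V t + (C * p ^ 2 * t ^ (p - 2)) • gradient f (X t) = 0) :
    HasDerivAt (energy f xstar p C X V)
      (C * p * t ^ (p - 1) * (f (X t) - f xstar - ⟪gradient f (X t), X t - xstar⟫)) t := by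
  have hZ := hasDerivAt_add_div_smul_sub (xstar := xstar) hp ht hX hV hODE
  have hfX : HasDerivAt (f ∘ X) ⟪gradient f (X t), V t⟫ t :=
    hf.hasGradientAt.comp_hasDerivAt hX
  have hkin := hZ.norm_sq.const_mul (1 / 2)
  have hpot := ((hasDerivAt_rpow_const (p := p) (Or.inl ht)).const_mul C).mul
    (hfX.sub_const (f xstar))
  have hpow : t ^ p = t ^ (p - 1) * t := by
    rw [← rpow_add_one ht]
    ring_nf
  refine (hkin.add hpot).congr_deriv ?_
  simp only [real_inner_smul_right, inner_add_left, inner_sub_left, inner_sub_right,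
    Function.comp_apply, real_inner_comm (gradient f (X t))]
  rw [hpow]
  field_simp
  ring

theorem energy_antitoneOn (hf : Differentiable ℝ f)
    (hconv : ∀ a b : E, f a + ⟪gradient f a, b - a⟫ ≤ f b)
    {t₀ : ℝ} (hp : 0 < p) (hC : 0 ≤ C) (ht₀ : 0 < t₀)
    (hX : ∀ t ≥ t₀, HasDerivAt X (V t) t)
    (hV : ∀ t ≥ t₀, HasDerivAt V (A t) t)
    (hODE : ∀ t ≥ t₀,
      A t + ((p + 1) / t) • V t + (C * p ^ 2 * t ^ (p - 2)) • gradient f (X t) = 0) :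
    AntitoneOn (energy f xstar p C X V) (Set.Ici t₀) := by
  have hderiv : ∀ t ≥ t₀, HasDerivAt (energy f xstar p C X V)
      (C * p * t ^ (p - 1) * (f (X t) - f xstar - ⟪gradient f (X t), X t - xstar⟫)) t :=
    fun t ht => hasDerivAt_energy (hf _) hp.ne' (ht₀.trans_le ht).ne' (hX t ht) (hV t ht)
      (hODE t ht)
  refine antitoneOn_of_hasDerivWithinAt_nonpos (convex_Ici t₀)
    (fun t ht => (hderiv t ht).continuousAt.continuousWithinAt)
    (fun t ht => (hderiv t (interior_subset ht)).hasDerivWithinAt) fun t ht => ?_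
  rw [interior_Ici] at ht
  have hgap : f (X t) - f xstar - ⟪gradient f (X t), X t - xstar⟫ ≤ 0 := by
    have := hconv (X t) xstar
    rw [← neg_sub, inner_neg_right] at this
    linarith
  have hrate : 0 ≤ C * p * t ^ (p - 1) := by
    have : 0 < t := ht₀.trans ht
    positivity
  exact mul_nonpos_of_nonneg_of_nonpos hrate hgap

end PolynomialEulerLagrange

theorem euclidean_polynomial_euler_lagrange_rate_general
    {E : Type*} [NormedAddCommGroup E] [InnerProductSpace ℝ E] [CompleteSpace E]
    (f : E → ℝ) (hf : Differentiable ℝ f)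
    (hconv : ∀ a b : E, f a + ⟪gradient f a, b - a⟫ ≤ f b)
    (xstar : E)
    (p C t₀ : ℝ) (hp : 0 < p) (hC : 0 < C) (ht₀ : 0 < t₀)
    (X V A : ℝ → E)
    (hX : ∀ t ≥ t₀, HasDerivAt X (V t) t)
    (hV : ∀ t ≥ t₀, HasDerivAt V (A t) t)
    (hODE : ∀ t ≥ t₀,
      A t + ((p + 1) / t) • V t + (C * p ^ 2 * t ^ (p - 2)) • gradient f (X t) = 0) :
    ∀ t ≥ t₀, f (X t) - f xstar ≤
      ((1 / 2) * ‖X t₀ + (t₀ / p) • V t₀ - xstar‖ ^ 2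
        + C * t₀ ^ p * (f (X t₀) - f xstar)) / (C * t ^ p) := by
  intro t ht
  have hCt : 0 < C * t ^ p := mul_pos hC (rpow_pos_of_pos (ht₀.trans_le ht) p)
  calc f (X t) - f xstar ≤ PolynomialEulerLagrange.energy f xstar p C X V t / (C * t ^ p) :=
      PolynomialEulerLagrange.sub_le_energy_div hCt
    _ ≤ PolynomialEulerLagrange.energy f xstar p C X V t₀ / (C * t ^ p) := by
      gcongr
      exact PolynomialEulerLagrange.energy_antitoneOn hf hconv hp hC.le ht₀ hX hV hODE
        Set.self_mem_Ici ht ht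

/-- Convergence rate of the Euclidean polynomial Euler–Lagrange
equation `Ẍ_t + ((p+1)/t) Ẋ_t + C p² t^{p−2} ∇f(X_t) = 0` (equation (46) of the
paper): `f (X t) − f x* ≤ E₀ / (C t^p)`, where
`E₀ = ½‖X t₀ + (t₀/p) Ẋ t₀ − x*‖² + C t₀^p (f (X t₀) − f x*)`. -/
theorem euclidean_polynomial_euler_lagrange_rate
    {E : Type*} [NormedAddCommGroup E] [InnerProductSpace ℝ E] [CompleteSpace E]
    (f : E → ℝ) (hf : Differentiable ℝ f)
    (hconv : ∀ a b : E, f a + ⟪gradient f a, b - a⟫ ≤ f b)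
    (xstar : E) (hmin : ∀ a, f xstar ≤ f a)
    (p C t₀ : ℝ) (hp : 0 < p) (hC : 0 < C) (ht₀ : 0 < t₀)
    (X V A : ℝ → E)
    (hX : ∀ t ≥ t₀, HasDerivAt X (V t) t)
    (hV : ∀ t ≥ t₀, HasDerivAt V (A t) t)
    (hODE : ∀ t ≥ t₀,
      A t + ((p + 1) / t) • V t + (C * p ^ 2 * t ^ (p - 2)) • gradient f (X t) = 0) :
    ∀ t ≥ t₀, f (X t) - f xstar ≤
      ((1 / 2) * ‖X t₀ + (t₀ / p) • V t₀ - xstar‖ ^ 2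
        + C * t₀ ^ p * (f (X t₀) - f xstar)) / (C * t ^ p) :=
  euclidean_polynomial_euler_lagrange_rate_general f hf hconv xstar p C t₀ hp hC ht₀ X V A hX hV
    hODE
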